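/- arXiv:2409.18750 — 3 statements merged into one kernel-verified Lean document; each statement's English description precedes it below -/
import Mathlib

section
/- Let F be a temporal forest and let u, v, w be vertices such that w lies on the unique path between u and v in F. Then for any time t, EA(u, v, t) = EA(w, v, EA(u, w, t)), where EA(x, y, t) is the minimum arrival time over all temporal paths from x to y departing no earlier than t (with EA = +∞ if no such path exists, and EA(x, x, t) = t). -/
open scoped Classical

/-- A temporal forest: an acyclic simple graph with a set of integer time labels
on each edge (given symmetrically). -/
structure TemporalForest (V : Type) where
  G : SimpleGraph V
  acyclic : G.IsAcyclic
  lab : V → V → Set ℤ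
  symm : ∀ u v, lab u v = lab v u

/-- Embedding of `ℤ` into `EReal` (times range over `ℤ ∪ {−∞, +∞}`). -/
def iE (n : ℤ) : EReal := ((n : ℝ) : EReal)

/-- `Journey F u v dep arr` : there is a temporal path from `u` to `v` in `F`
following the (unique) path from `u` to `v`, selecting a label on each edge,
with non-decreasing labels, departure time `dep` and arrival time `arr`. -/
def Journey {V : Type} (F : TemporalForest V) (u v : V) (dep arr : ℤ) : Prop :=
  ∃ (p : F.G.Walk u v) (L : List ℤ), p.IsPath ∧ L.length = p.length ∧
    List.Chain' (· ≤ ·) L ∧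
    (∀ (i : ℕ) (h : i < L.length), L.get ⟨i, h⟩ ∈ F.lab (p.getVert i) (p.getVert (i+1))) ∧
    L.head? = some dep ∧ L.getLast? = some arr

/-- Earliest arrival time of a temporal path from `u` to `v` departing no earlier
than `t`; `+∞` (`sInf ∅`) if no such path exists, and `EA u u t = t`. -/
noncomputable def EA {V : Type} (F : TemporalForest V) (u v : V) (t : EReal) : EReal :=
  if u = v then t
  else sInf {a : EReal | ∃ dep arr : ℤ, Journey F u v dep arr ∧ t ≤ iE dep ∧ a = iE arr}

/-- Latest departure time of a temporal path from `u` to `v` arriving no later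
than `t`; `−∞` (`sSup ∅`) if no such path exists, and `LD u u t = t`. -/
noncomputable def LD {V : Type} (F : TemporalForest V) (u v : V) (t : EReal) : EReal :=
  if u = v then t
  else sSup {d : EReal | ∃ dep arr : ℤ, Journey F u v dep arr ∧ iE arr ≤ t ∧ d = iE dep}

/- ----------------- auxiliary lemmas ----------------- -/

lemma iE_le_iE {a b : ℤ} : iE a ≤ iE b ↔ a ≤ b := by simp [iE]
lemma iE_lt_iE {a b : ℤ} : iE a < iE b ↔ a < b := by simp [iE]

lemma head?_take {α : Type*} {l : List α} {k : ℕ} (hk : 1 ≤ k) : (l.take k).head? = l.head? := by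
  cases l with
  | nil => simp
  | cons a l =>
    obtain ⟨k', rfl⟩ : ∃ k', k = k' + 1 := ⟨k - 1, by omega⟩
    simp [List.take_succ_cons]

lemma mem_support_all {V : Type} (F : TemporalForest V) {u v w : V}
    (hw : ∃ p : F.G.Walk u v, p.IsPath ∧ w ∈ p.support) :
    ∀ p' : F.G.Walk u v, p'.IsPath → w ∈ p'.support := by
  obtain ⟨p, hp, hwp⟩ := hw
  intro p' hp'
  have h := F.acyclic.path_unique ⟨p', hp'⟩ ⟨p, hp⟩
  rw [Subtype.mk_eq_mk] at h
  rwa [h]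

/-- Splitting a journey at an intermediate vertex of its path. -/
lemma journey_split {V : Type} (F : TemporalForest V) {u v w : V} {dep arr : ℤ}
    (huw : u ≠ w) (hwv : w ≠ v) (hJ : Journey F u v dep arr)
    (hws : ∀ p : F.G.Walk u v, p.IsPath → w ∈ p.support) :
    ∃ arr₁ dep₂ : ℤ, arr₁ ≤ dep₂ ∧ Journey F u w dep arr₁ ∧ Journey F w v dep₂ arr := by
  obtain ⟨p, L, hp, hlen, hchain, hlab, hhead, hlast⟩ := hJ
  have hwp : w ∈ p.support := hws p hp
  set p₁ := p.takeUntil w hwp with hp₁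
  set p₂ := p.dropUntil w hwp with hp₂
  have hspec : p₁.append p₂ = p := p.take_spec hwp
  set k := p₁.length with hk
  have hklen : k + p₂.length = p.length := by
    rw [← hspec, SimpleGraph.Walk.length_append]
  have hk1 : 1 ≤ k := by
    rcases Nat.eq_zero_or_pos k with h0 | h
    · exact absurd (SimpleGraph.Walk.eq_of_length_eq_zero h0) huw
    · exact h
  have hk2 : 1 ≤ p₂.length := by
    rcases Nat.eq_zero_or_pos p₂.length with h0 | h
    · exact absurd (SimpleGraph.Walk.eq_of_length_eq_zero h0) hwv
    · exact h
  have hkL : k < L.length := by omega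
  have hgv : ∀ i : ℕ, p.getVert i = if i < k then p₁.getVert i else p₂.getVert (i - k) := by
    intro i; rw [← hspec, SimpleGraph.Walk.getVert_append]
  have hgv₁ : ∀ i ≤ k, p₁.getVert i = p.getVert i := by
    intro i hi
    rcases lt_or_eq_of_le hi with h | h
    · rw [hgv i, if_pos h]
    · rw [h, hgv k, if_neg (lt_irrefl _), Nat.sub_self]
      show p₁.getVert p₁.length = p₂.getVert 0
      rw [SimpleGraph.Walk.getVert_length, SimpleGraph.Walk.getVert_zero]
  have hgv₂ : ∀ i : ℕ, p₂.getVert i = p.getVert (k + i) := by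
    intro i
    rw [hgv (k + i), if_neg (by omega), Nat.add_sub_cancel_left]
  refine ⟨L[k-1]'(by omega), L[k]'hkL, ?_, ?_, ?_⟩
  · have h := List.isChain_iff_getElem.mp hchain (k-1) (by omega)
    have he : L[k]'hkL = L[k-1+1]'(by omega) := by congr 1; omega
    rw [he]
    exact h
  · -- the journey from `u` to `w`
    refine ⟨p₁, L.take k, hp.takeUntil hwp, by simp; omega, hchain.take k, ?_, ?_, ?_⟩
    · intro i hi
      have hik : i < k := by simp at hi; omega
      have hg : (L.take k).get ⟨i, hi⟩ = L[i]'(by omega) := List.getElem_take ..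
      rw [hg, hgv₁ i (by omega), hgv₁ (i+1) (by omega)]
      exact hlab i (by omega)
    · rw [head?_take hk1, hhead]
    · rw [List.getLast?_eq_getElem?]
      have h1 : (L.take k).length = k := by simp; omega
      rw [h1, List.getElem?_eq_getElem (by simp; omega)]
      congr 1
      exact List.getElem_take ..
  · -- the journey from `w` to `v`
    refine ⟨p₂, L.drop k, hp.dropUntil hwp, by simp; omega, hchain.drop k, ?_, ?_, ?_⟩
    · intro i hi
      have hik : i < L.length - k := by simp at hi; omega
      have hg : (L.drop k).get ⟨i, hi⟩ = L[k + i]'(by omega) := List.getElem_drop ..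
      rw [hg, hgv₂ i, hgv₂ (i+1), ← Nat.add_assoc]
      exact hlab (k + i) (by omega)
    · rw [List.head?_eq_getElem?, List.getElem?_eq_getElem (by simp; omega)]
      congr 1
      exact List.getElem_drop ..
    · rw [← hlast, List.getLast?_eq_getElem?, List.getLast?_eq_getElem?]
      have h1 : (L.drop k).length = L.length - k := by simp
      rw [h1, List.getElem?_eq_getElem (by omega), List.getElem?_eq_getElem (by omega)]
      congr 1
      rw [List.getElem_drop]
      congr 1
      omega

/-- Concatenating two journeys through `w`, when `w` lies on the `u`–`v` path. -/
lemma journey_append {V : Type} (F : TemporalForest V) {u v w : V} {dep₁ arr₁ dep₂ arr₂ : ℤ}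
    (hw : ∃ p : F.G.Walk u v, p.IsPath ∧ w ∈ p.support)
    (h1 : Journey F u w dep₁ arr₁) (h2 : Journey F w v dep₂ arr₂)
    (hle : arr₁ ≤ dep₂) : Journey F u v dep₁ arr₂ := by
  obtain ⟨q₁, L₁, hq₁, hlen₁, hch₁, hlab₁, hh₁, hl₁⟩ := h1
  obtain ⟨q₂, L₂, hq₂, hlen₂, hch₂, hlab₂, hh₂, hl₂⟩ := h2
  obtain ⟨p, hp, hwp⟩ := hw
  have e₁ : q₁ = p.takeUntil w hwp := by
    have h := F.acyclic.path_unique ⟨q₁, hq₁⟩ ⟨p.takeUntil w hwp, hp.takeUntil hwp⟩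
    rwa [Subtype.mk_eq_mk] at h
  have e₂ : q₂ = p.dropUntil w hwp := by
    have h := F.acyclic.path_unique ⟨q₂, hq₂⟩ ⟨p.dropUntil w hwp, hp.dropUntil hwp⟩
    rwa [Subtype.mk_eq_mk] at h
  have hpath : (q₁.append q₂).IsPath := by
    rw [e₁, e₂, p.take_spec hwp]; exact hp
  have hL₁ne : L₁ ≠ [] := by intro h; rw [h] at hh₁; simp at hh₁
  have hL₂ne : L₂ ≠ [] := by intro h; rw [h] at hl₂; simp at hl₂
  set k := q₁.length with hk
  have hgv : ∀ i : ℕ, (q₁.append q₂).getVert i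
      = if i < k then q₁.getVert i else q₂.getVert (i - k) :=
    fun i => SimpleGraph.Walk.getVert_append q₁ q₂ i
  refine ⟨q₁.append q₂, L₁ ++ L₂, hpath, by simp [hlen₁, hlen₂, hk], ?_, ?_, ?_, ?_⟩
  · refine hch₁.append hch₂ ?_
    intro x hx y hy
    rw [hl₁] at hx; rw [hh₂] at hy
    simp at hx hy; subst hx; subst hy; exact hle
  · intro i hi
    have hiL : i < L₁.length + L₂.length := by simpa using hi
    by_cases hik : i < k
    · have hget : (L₁ ++ L₂).get ⟨i, hi⟩ = L₁[i]'(by omega) := by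
        simp only [List.get_eq_getElem]
        exact List.getElem_append_left (by omega)
      have hv1 : (q₁.append q₂).getVert i = q₁.getVert i := by rw [hgv i, if_pos hik]
      have hv2 : (q₁.append q₂).getVert (i+1) = q₁.getVert (i+1) := by
        by_cases h : i + 1 < k
        · rw [hgv (i+1), if_pos h]
        · have hik1 : i + 1 = k := by omega
          rw [hgv (i+1), if_neg h]
          have h0 : i + 1 - k = 0 := by omega
          rw [h0, SimpleGraph.Walk.getVert_zero, hik1]
          exact (SimpleGraph.Walk.getVert_length q₁).symm
      rw [hget, hv1, hv2]
      exact hlab₁ i (by omega)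
    · have hget : (L₁ ++ L₂).get ⟨i, hi⟩ = L₂[i - L₁.length]'(by omega) := by
        simp only [List.get_eq_getElem]
        exact List.getElem_append_right (by omega)
      have hv1 : (q₁.append q₂).getVert i = q₂.getVert (i - k) := by rw [hgv i, if_neg hik]
      have hv2 : (q₁.append q₂).getVert (i+1) = q₂.getVert ((i - k)+1) := by
        rw [hgv (i+1), if_neg (by omega)]
        congr 1
        omega
      rw [hget, hv1, hv2]
      have he : L₂[i - L₁.length]'(by omega) = L₂.get ⟨i - k, by omega⟩ := by
        simp only [List.get_eq_getElem]
        congr 1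
        omega
      rw [he]
      exact hlab₂ (i - k) (by omega)
  · rw [List.head?_append_of_ne_nil L₁ hL₁ne, hh₁]
  · rw [List.getLast?_append_of_ne_nil L₁ hL₂ne, hl₂]

lemma EA_self {V : Type} (F : TemporalForest V) (u : V) (t : EReal) : EA F u u t = t :=
  if_pos rfl

lemma EA_ne {V : Type} (F : TemporalForest V) {u v : V} (h : u ≠ v) (t : EReal) :
    EA F u v t = sInf {a : EReal | ∃ dep arr : ℤ, Journey F u v dep arr ∧ t ≤ iE dep ∧ a = iE arr} :=
  if_neg h

/-- If `w` lies on the unique path between `u` and `v` in the temporal forest `F`,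
then `EA(u, v, t) = EA(w, v, EA(u, w, t))`. -/
theorem ea_composition {V : Type} (F : TemporalForest V) (u v w : V)
    (hw : ∃ p : F.G.Walk u v, p.IsPath ∧ w ∈ p.support) (t : EReal) :
    EA F u v t = EA F w v (EA F u w t) := by
  by_cases huv : u = v
  · subst huv
    have hwu : w = u := by
      obtain ⟨p, hp, hwp⟩ := hw
      cases p with
      | nil => simpa using hwp
      | cons h q =>
        exfalso
        have hnd := hp.support_nodup
        rw [SimpleGraph.Walk.support_cons] at hnd
        exact (List.nodup_cons.mp hnd).1 q.end_mem_support
    subst hwu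
    simp [EA_self]
  by_cases huw : u = w
  · subst huw
    rw [EA_self]
  by_cases hwv : w = v
  · subst hwv
    rw [EA_self]
  have hws := mem_support_all F hw
  rw [EA_ne F huv, EA_ne F hwv]
  congr 1
  ext a
  simp only [Set.mem_setOf_eq]
  constructor
  · rintro ⟨dep, arr, hJ, ht, rfl⟩
    obtain ⟨arr₁, dep₂, hled, hJ1, hJ2⟩ := journey_split F huw hwv hJ hws
    refine ⟨dep₂, arr, hJ2, ?_, rfl⟩
    calc EA F u w t ≤ iE arr₁ := by
          rw [EA_ne F huw]
          exact sInf_le ⟨dep, arr₁, hJ1, ht, rfl⟩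
      _ ≤ iE dep₂ := iE_le_iE.mpr hled
  · rintro ⟨dep₂, arr, hJ2, hA, rfl⟩
    rw [EA_ne F huw] at hA
    have hlt : sInf {a : EReal | ∃ dep arr : ℤ, Journey F u w dep arr ∧ t ≤ iE dep ∧ a = iE arr}
        < iE (dep₂ + 1) := lt_of_le_of_lt hA (iE_lt_iE.mpr (by omega))
    obtain ⟨x, hx, hxlt⟩ := sInf_lt_iff.mp hlt
    obtain ⟨dep₁, arr₁, hJ1, ht1, rfl⟩ := hx
    have harr : arr₁ ≤ dep₂ := by
      have := iE_lt_iE.mp hxlt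
      omega
    exact ⟨dep₁, arr, journey_append F hw hJ1 hJ2 harr, ht1, rfl⟩
end

section
/- Let F be a temporal forest of rooted trees with successor forest 𝓕(λ). Suppose vertices u, v satisfy v = p(p(u)). Let (ℓ₀,x₀)=(ℓ,u),(ℓ₁,x₁),…,(ℓ_k,x_k) be the maximal path of red (intra-block, weight-0) edges in 𝓕 starting from (ℓ,u) and proceeding towards ancestors. Then for every 0 ≤ i ≤ k, EA(x_i, v, ℓ_i) = EA(x_k, v, ℓ_k). -/
open scoped Classical

/-- `succ t X` : the minimum element of `X ⊆ ℤ` that is `≥ t`, or `+∞` if none. -/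
noncomputable def eSucc (t : EReal) (X : Set ℤ) : EReal :=
  sInf {y : EReal | ∃ x ∈ X, y = iE x ∧ t ≤ iE x}

/-- The lexicographic order on the nodes `(ℓ, u)` of the successor forest:
first by label, then by a fixed total order on vertices. -/
def NLt {V : Type} [LinearOrder V] (a b : ℤ × V) : Prop :=
  a.1 < b.1 ∨ (a.1 = b.1 ∧ a.2 < b.2)

/-- The block `𝓑_v` of a vertex `v` in a rooted forest given by the parent map
`par` (with `par r = none` for roots) and labels `lam u = λ(e_u)`:
all nodes `(ℓ, u)` with `p(u) = v` and `ℓ ∈ λ(e_u)`. -/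
def Block {V : Type} (par : V → Option V) (lam : V → Set ℤ) (v : V) :
    Set (ℤ × V) :=
  {x | par x.2 = some v ∧ x.1 ∈ lam x.2}

/-- `y` is the strict successor of `x` in `B` (w.r.t. the lexicographic order). -/
def IsStrictSucc {V : Type} [LinearOrder V] (B : Set (ℤ × V)) (x y : ℤ × V) : Prop :=
  y ∈ B ∧ NLt x y ∧ ∀ z ∈ B, NLt x z → (y = z ∨ NLt y z)

/-- `q = succ(ℓ, S)`: the minimum element of `S` that is `≥ ℓ` (finite case). -/
def IsSucc (S : Set ℤ) (ℓ q : ℤ) : Prop :=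
  q ∈ S ∧ ℓ ≤ q ∧ ∀ r ∈ S, ℓ ≤ r → q ≤ r

/-- `SigmaParent par lam x y` : `y = σ_{x.2}(x.1, λ)`, the parent of the node
`x = (ℓ, u)` in the successor forest `𝓕(λ)`.  With `v = p(u)`: if `v` is a root,
`σ_u(ℓ)` is the strict successor of `(ℓ, u)` in `𝓑_v`; otherwise, with
`ℓ' = succ(ℓ, λ(e_v))` and `(ℓ⁺, u⁺)` the strict successor of `(ℓ, u)` in `𝓑_v`:
`σ_u(ℓ) = (ℓ⁺, u⁺)` if it exists and `ℓ⁺ ≤ ℓ'` (vacuous if `ℓ' = +∞`), and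
`σ_u(ℓ) = (ℓ', v)` if `ℓ' < ℓ⁺` (or no strict successor exists) and `ℓ' < +∞`. -/
def SigmaParent {V : Type} [LinearOrder V] (par : V → Option V)
    (lam : V → Set ℤ) (x y : ℤ × V) : Prop :=
  ∃ v, par x.2 = some v ∧ x.1 ∈ lam x.2 ∧
    ((IsStrictSucc (Block par lam v) x y ∧
        (par v = none ∨ ∀ q : ℤ, IsSucc (lam v) x.1 q → y.1 ≤ q)) ∨
      (par v ≠ none ∧ y.2 = v ∧ IsSucc (lam v) x.1 y.1 ∧
        ∀ z : ℤ × V, IsStrictSucc (Block par lam v) x z → y.1 < z.1))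

/-- An upward temporal path from `u` to an ancestor `v`, with departure and
arrival times: a selection of a label on each edge of the path `u, p(u), …, v`,
with non-decreasing labels. -/
inductive UpJourney {V : Type} (par : V → Option V) (lam : V → Set ℤ) :
    V → V → ℤ → ℤ → Prop
  | single {u v : V} {ℓ : ℤ} : par u = some v → ℓ ∈ lam u →
      UpJourney par lam u v ℓ ℓ
  | cons {u x v : V} {ℓ dep arr : ℤ} : par u = some x → ℓ ∈ lam u → ℓ ≤ dep →
      UpJourney par lam x v dep arr → UpJourney par lam u v ℓ arr

/-- Earliest arrival time of a temporal path from `u` to its ancestor `v`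
departing no earlier than `t`; `+∞` (`sInf ∅`) if no such path exists. -/
noncomputable def uEA {V : Type} (par : V → Option V) (lam : V → Set ℤ)
    (u v : V) (t : EReal) : EReal :=
  sInf {a : EReal | ∃ dep arr : ℤ,
    UpJourney par lam u v dep arr ∧ t ≤ iE dep ∧ a = iE arr}

lemma eSucc_eq_of_le_of_le_succ {S : Set ℤ} {ℓ₀ ℓ₁ : ℤ} (h01 : ℓ₀ ≤ ℓ₁)
    (hsucc : ∀ q, IsSucc S ℓ₀ q → ℓ₁ ≤ q) :
    eSucc (iE ℓ₀) S = eSucc (iE ℓ₁) S := by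
  apply le_antisymm
  · exact sInf_le_sInf fun _ ⟨m, hm, he, hle⟩ => ⟨m, hm, he, (iE_le_iE.mpr h01).trans hle⟩
  · refine le_sInf ?_
    rintro _ ⟨m, hm, rfl, hle⟩
    obtain ⟨q, ⟨hqS, hq₀⟩, hqmin⟩ := Int.exists_least_of_bdd (P := fun z => z ∈ S ∧ ℓ₀ ≤ z)
      ⟨ℓ₀, fun z hz => hz.2⟩ ⟨m, hm, iE_le_iE.mp hle⟩
    have hq₁ : ℓ₁ ≤ q := hsucc q ⟨hqS, hq₀, fun r hr hℓr => hqmin r ⟨hr, hℓr⟩⟩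
    calc eSucc (iE ℓ₁) S ≤ iE q := sInf_le ⟨q, hqS, rfl, iE_le_iE.mpr hq₁⟩
      _ ≤ iE m := iE_le_iE.mpr (hqmin m ⟨hm, iE_le_iE.mp hle⟩)

lemma eq_of_eq_succ_of_le {α : Type*} {f : ℕ → α} {k : ℕ} (h : ∀ i < k, f i = f (i + 1))
    {i : ℕ} (hi : i ≤ k) : f i = f k := by
  induction k, hi using Nat.le_induction with
  | base => rfl
  | succ j _ ih => exact (ih fun n hn => h n (by omega)).trans (h j (by omega))

section Forest

variable {V : Type} {par : V → Option V} {lam : V → Set ℤ}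

lemma UpJourney.transGen_parent {a b : V} {dep arr : ℤ} (h : UpJourney par lam a b dep arr) :
    Relation.TransGen (fun p c => par c = some p) b a := by
  induction h with
  | single h _ => exact .single h
  | cons h _ _ _ ih => exact ih.tail h

lemma UpJourney.of_parent_parent (hwf : WellFounded fun a b : V => par b = some a)
    {w x v : V} {dep arr : ℤ} (hw : par w = some x) (hx : par x = some v)
    (h : UpJourney par lam w v dep arr) :
    dep ∈ lam w ∧ arr ∈ lam x ∧ dep ≤ arr := by
  cases h with
  | single hv _ =>
    obtain rfl : x = v := Option.some_injective _ (hw.symm.trans hv)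
    exact absurd hx (hwf.irrefl.irrefl x)
  | cons hx' hdep hle hrest =>
    obtain rfl := Option.some_injective _ (hw.symm.trans hx')
    cases hrest with
    | single _ harr => exact ⟨hdep, harr, hle⟩
    | cons hv _ _ hrest' =>
      obtain rfl := Option.some_injective _ (hx.symm.trans hv)
      exact absurd hrest'.transGen_parent (hwf.transGen.irrefl.irrefl v)

lemma uEA_eq_eSucc (hwf : WellFounded fun a b : V => par b = some a)
    {w x v : V} (hw : par w = some x) (hx : par x = some v) {t : ℤ} (ht : t ∈ lam w) :
    uEA par lam w v (iE t) = eSucc (iE t) (lam x) := by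
  refine congrArg sInf (Set.ext fun a => ⟨?_, ?_⟩)
  · rintro ⟨dep, arr, hj, hdep, rfl⟩
    obtain ⟨-, harr, hle⟩ := hj.of_parent_parent hwf hw hx
    exact ⟨arr, harr, rfl, hdep.trans (iE_le_iE.mpr hle)⟩
  · rintro ⟨m, hm, rfl, hle⟩
    exact ⟨t, m, .cons hw ht (iE_le_iE.mp hle) (.single hx hm), le_rfl, rfl⟩

lemma SigmaParent.red_edge [LinearOrder V] (hwf : WellFounded fun a b : V => par b = some a)
    {x : V} (hx : par x ≠ none) {a b : ℤ × V} (ha : par a.2 = some x)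
    (hab : SigmaParent par lam a b) (hb : par b.2 = some x) :
    b.1 ∈ lam b.2 ∧ a.1 ≤ b.1 ∧ ∀ q, IsSucc (lam x) a.1 q → b.1 ≤ q := by
  obtain ⟨x', hx', -, hsucc | ⟨-, hbx, -⟩⟩ := hab
  · obtain rfl := Option.some_injective _ (ha.symm.trans hx')
    obtain ⟨⟨-, hmem⟩, hlt, -⟩ := hsucc.1
    refine ⟨hmem, ?_, hsucc.2.resolve_left hx⟩
    rcases hlt with hlt | ⟨heq, -⟩
    exacts [hlt.le, heq.le]
  · obtain rfl := Option.some_injective _ (ha.symm.trans hx')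
    exact absurd (hbx ▸ hb) (hwf.irrefl.irrefl x)

end Forest

theorem uEA_constant_on_red_path_general {V : Type} [LinearOrder V]
    (par : V → Option V) (lam : V → Set ℤ)
    (hwf : WellFounded fun a b : V => par b = some a)
    (u x v : V) (hpu : par u = some x) (hpx : par x = some v)
    (ℓ : ℤ) (hℓ : ℓ ∈ lam u) (k : ℕ) (nodes : ℕ → ℤ × V)
    (h0 : nodes 0 = (ℓ, u))
    (hred : ∀ i < k, SigmaParent par lam (nodes i) (nodes (i + 1)) ∧
      par (nodes (i + 1)).2 = par (nodes i).2) :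
    ∀ i ≤ k, uEA par lam (nodes i).2 v (iE (nodes i).1) =
      uEA par lam (nodes k).2 v (iE (nodes k).1) := by
  have hx : par x ≠ none := by simp [hpx]
  have in_block : ∀ i ≤ k, par (nodes i).2 = some x ∧ (nodes i).1 ∈ lam (nodes i).2 := by
    intro i
    induction i with
    | zero => exact fun _ => h0 ▸ ⟨hpu, hℓ⟩
    | succ i ih =>
      intro hi
      have hpar := (ih (by omega)).1
      have hpar' := (hred i hi).2.trans hpar
      exact ⟨hpar', ((hred i hi).1.red_edge hwf hx hpar hpar').1⟩
  have step : ∀ i < k, eSucc (iE (nodes i).1) (lam x) = eSucc (iE (nodes (i + 1)).1) (lam x) := by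
    intro i hi
    have hpar' := (hred i hi).2.trans (in_block i hi.le).1
    obtain ⟨-, hle, hsucc⟩ := (hred i hi).1.red_edge hwf hx (in_block i hi.le).1 hpar'
    exact eSucc_eq_of_le_of_le_succ hle hsucc
  intro i hi
  rw [uEA_eq_eSucc hwf (in_block i hi).1 hpx (in_block i hi).2,
    uEA_eq_eSucc hwf (in_block k le_rfl).1 hpx (in_block k le_rfl).2]
  exact eq_of_eq_succ_of_le (f := fun i => eSucc (iE (nodes i).1) (lam x)) step hi

/-- Let `v = p(p(u))` and let `(ℓ₀, x₀) = (ℓ, u), (ℓ₁, x₁), …, (ℓ_k, x_k)` be the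
maximal path of red (intra-block) edges in the successor forest `𝓕` starting from
`(ℓ, u)`.  Then `EA(x_i, v, ℓ_i) = EA(x_k, v, ℓ_k)` for every `0 ≤ i ≤ k`. -/
theorem uEA_constant_on_red_path {V : Type} [LinearOrder V]
    (par : V → Option V) (lam : V → Set ℤ)
    (hwf : WellFounded fun a b : V => par b = some a)
    (u x v : V) (hpu : par u = some x) (hpx : par x = some v)
    (ℓ : ℤ) (hℓ : ℓ ∈ lam u) (k : ℕ) (nodes : ℕ → ℤ × V)
    (h0 : nodes 0 = (ℓ, u))
    (hred : ∀ i < k, SigmaParent par lam (nodes i) (nodes (i + 1)) ∧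
      par (nodes (i + 1)).2 = par (nodes i).2)
    (hmax : ¬ ∃ y : ℤ × V, SigmaParent par lam (nodes k) y ∧
      par y.2 = par (nodes k).2) :
    ∀ i ≤ k, uEA par lam (nodes i).2 v (iE (nodes i).1) =
      uEA par lam (nodes k).2 v (iE (nodes k).1) :=
  uEA_constant_on_red_path_general par lam hwf u x v hpu hpx ℓ hℓ k nodes h0 hred
end

section
/- Let F be a temporal forest with latencies and let σ_u be defined using NextHop as in context. For any node (α, ℓ, u) with strict successor (α⁺, ℓ⁺, u⁺) in block 𝓑_{p(u)}, if both NextHop(α, ℓ, u) = (α', ℓ', v) and NextHop(α⁺, ℓ⁺, u⁺) exist, then NextHop(α⁺, ℓ⁺, u⁺) either equals (α', ℓ', v) or follows it in the lexicographic ordering of 𝓑_{p(v)}. -/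
/-- The lexicographic order on the nodes `(α, ℓ, u)` of the successor forest of a
temporal forest with latencies: first by arrival `α`, then by departure `ℓ`,
then by a fixed total order on vertices. -/
def NLt3 {V : Type} [LinearOrder V] (a b : ℤ × ℤ × V) : Prop :=
  a.1 < b.1 ∨ (a.1 = b.1 ∧ (a.2.1 < b.2.1 ∨ (a.2.1 = b.2.1 ∧ a.2.2 < b.2.2)))

/-- The block `𝓑_v`: all nodes `(α, ℓ, u)` with `p(u) = v` and `(ℓ, α) ∈ λ(e_u)`,
for a rooted forest with parent map `par` and latency labels `lam`. -/
def Block3 {V : Type} (par : V → Option V) (lam : V → Set (ℤ × ℤ)) (v : V) :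
    Set (ℤ × ℤ × V) :=
  {x | par x.2.2 = some v ∧ (x.2.1, x.1) ∈ lam x.2.2}

/-- `y` is the strict successor of `x` in `B` w.r.t. the lexicographic order. -/
def IsStrictSucc3 {V : Type} [LinearOrder V] (B : Set (ℤ × ℤ × V))
    (x y : ℤ × ℤ × V) : Prop :=
  y ∈ B ∧ NLt3 x y ∧ ∀ z ∈ B, NLt3 x z → (y = z ∨ NLt3 y z)

/-- `IsNextHop par lam x y` : for `x = (α, ℓ, u)` with `v = p(u)`,
`y = NextHop(α, ℓ, u)`: the node `(α', ℓ', v)` with `(ℓ', α') ∈ λ(e_v)`,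
`ℓ' ≥ α`, minimizing `α'` and breaking ties in favor of the largest `ℓ'`. -/
def IsNextHop {V : Type} (par : V → Option V) (lam : V → Set (ℤ × ℤ))
    (x y : ℤ × ℤ × V) : Prop :=
  ∃ v, par x.2.2 = some v ∧ y.2.2 = v ∧ (y.2.1, y.1) ∈ lam v ∧ x.1 ≤ y.2.1 ∧
    ∀ p a : ℤ, (p, a) ∈ lam v → x.1 ≤ p → (y.1 < a ∨ (y.1 = a ∧ p ≤ y.2.1))

/-!
Both next hops leave the same vertex `p(u) = p(u⁺)`, and `α ≤ α⁺`, so every departure available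
to `(α⁺, ℓ⁺, u⁺)` is also available to `(α, ℓ, u)`. Hence the minimal choice for the earlier
node is at least as good, in the `(α', -ℓ')` order, as the one for the later node; if the two
choices are equally good they coincide.
-/

section

variable {V : Type} [LinearOrder V]

lemma NLt3.fst_le {a b : ℤ × ℤ × V} (h : NLt3 a b) : a.1 ≤ b.1 := by
  rcases h with h | ⟨h, -⟩
  exacts [h.le, h.le]

lemma isNextHop_mono {par : V → Option V} {lam : V → Set (ℤ × ℤ)}
    {x xs y ys : ℤ × ℤ × V} (hpar : par x.2.2 = par xs.2.2) (hle : x.1 ≤ xs.1)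
    (hy : IsNextHop par lam x y) (hys : IsNextHop par lam xs ys) :
    ys = y ∨ NLt3 y ys := by
  obtain ⟨w, hw, hyw, hylam, -, hymin⟩ := hy
  obtain ⟨w', hw', hysw, hyslam, hxys, hysmin⟩ := hys
  obtain rfl : w = w' := Option.some_injective _ (hw.symm.trans (hpar.trans hw'))
  rcases hymin ys.2.1 ys.1 hyslam (hle.trans hxys) with hlt | ⟨harr, hdep⟩
  · exact Or.inr (Or.inl hlt)
  rcases hysmin y.2.1 y.1 hylam (hxys.trans hdep) with hlt | ⟨-, hdep'⟩
  · omega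
  exact Or.inl (Prod.ext harr.symm (Prod.ext (le_antisymm hdep hdep') (hysw.trans hyw.symm)))

end

theorem nextHop_monotone_general {V : Type} [LinearOrder V]
    (par : V → Option V) (lam : V → Set (ℤ × ℤ))
    (v : V) (x xs y ys : ℤ × ℤ × V) (hv : par x.2.2 = some v)
    (hss : IsStrictSucc3 (Block3 par lam v) x xs)
    (hy : IsNextHop par lam x y) (hys : IsNextHop par lam xs ys) :
    ys = y ∨ NLt3 y ys := by
  obtain ⟨⟨hxs, -⟩, hlt, -⟩ := hss
  exact isNextHop_mono (hv.trans hxs.symm) hlt.fst_le hy hys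

/-- If `(α⁺, ℓ⁺, u⁺)` is the strict successor of `(α, ℓ, u)` in its block and both
`NextHop(α, ℓ, u)` and `NextHop(α⁺, ℓ⁺, u⁺)` exist, then `NextHop(α⁺, ℓ⁺, u⁺)`
either equals `NextHop(α, ℓ, u)` or follows it in the lexicographic order. -/
theorem nextHop_monotone {V : Type} [LinearOrder V]
    (par : V → Option V) (lam : V → Set (ℤ × ℤ))
    (hwf : WellFounded fun a b : V => par b = some a)
    (v : V) (x xs y ys : ℤ × ℤ × V) (hv : par x.2.2 = some v)
    (hss : IsStrictSucc3 (Block3 par lam v) x xs)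
    (hy : IsNextHop par lam x y) (hys : IsNextHop par lam xs ys) :
    ys = y ∨ NLt3 y ys :=
  nextHop_monotone_general par lam v x xs y ys hv hss hy hys
end
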